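/- arXiv:2205.15379 — 3 statements merged into one kernel-verified Lean document; each statement's English description precedes it below -/
import Mathlib

section
/- Under the single-step Lipschitz assumptions with constants L_μ and L_π and the condition γ·L_μ < 1 with 0 ≤ γ < 1, the discounted visitation distributions ρ^{π}_μ := (1-γ)·∑_{t≥0} γᵗ · Pᵗ_π(μ) satisfy W(ρ^{π₁}_μ, ρ^{π₂}_μ) ≤ (γ·L_π)/(1 - γ·L_μ) · W(π₁, π₂). -/
open MeasureTheory ENNReal

/-- Shifted geometric-type sum: `∑' t, (if i < t then c * γ^t else 0) = c * γ^(i+1) * (1-γ)⁻¹`. -/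
lemma tsum_ite_lt_geometric (γ c : ℝ≥0∞) (i : ℕ) :
    (∑' t : ℕ, if i < t then c * γ ^ t else 0) = c * γ ^ (i + 1) * (1 - γ)⁻¹ := by
  have h : (∑' t : ℕ, if i < t then c * γ ^ t else 0)
      = ∑' s : ℕ, c * γ ^ (s + (i + 1)) := by
    refine tsum_eq_tsum_of_ne_zero_bij (fun x => (x : ℕ) + (i + 1)) ?_ ?_ ?_
    · intro x y hxy
      exact Subtype.ext (Nat.add_right_cancel hxy)
    · intro t ht
      simp only [Function.mem_support, ne_eq, ite_eq_right_iff, not_forall] at ht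
      obtain ⟨hlt, hne⟩ := ht
      have hts : t - (i + 1) + (i + 1) = t := by omega
      refine ⟨⟨t - (i + 1), ?_⟩, hts⟩
      simp only [Function.mem_support, ne_eq, hts]
      exact hne
    · intro x
      show (if i < (x : ℕ) + (i + 1) then c * γ ^ ((x : ℕ) + (i + 1)) else 0)
        = c * γ ^ ((x : ℕ) + (i + 1))
      rw [if_pos (by omega)]
  rw [h]
  have : ∀ s : ℕ, c * γ ^ (s + (i + 1)) = c * γ ^ (i + 1) * γ ^ s := by
    intro s; rw [pow_add]; ring
  simp_rw [this]
  rw [ENNReal.tsum_mul_left, ENNReal.tsum_geometric]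

/-- Under single-step Lipschitz assumptions on the transition operator (with
constants `L_μ` and `L_π`), `γ·L_μ < 1`, `γ < 1`, and structural properties of the
Wasserstein distance `W` (vanishing on the diagonal, triangle inequality, and
convexity under countable mixtures), the discounted visitation distributions
`ρ^π_μ = ∑_t ((1-γ)·γᵗ) • Pᵗ_π(μ)` satisfy
`W(ρ^{π₁}_μ, ρ^{π₂}_μ) ≤ γ·L_π/(1 - γ·L_μ) · W(π₁, π₂)`. -/
theorem visitation_wasserstein_bound {α Pol : Type*} [MeasurableSpace α]
    (W : Measure α → Measure α → ℝ≥0∞) (Wp : Pol → Pol → ℝ≥0∞)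
    (P : Pol → Measure α → Measure α) (γ Lμ Lπ : ℝ≥0∞)
    (hγ : γ < 1) (hγLμ : γ * Lμ < 1)
    (hrefl : ∀ μ : Measure α, W μ μ = 0)
    (htri : ∀ μ₁ μ₂ μ₃ : Measure α, W μ₁ μ₃ ≤ W μ₁ μ₂ + W μ₂ μ₃)
    (hLμ : ∀ (π : Pol) (μ₁ μ₂ : Measure α), W (P π μ₁) (P π μ₂) ≤ Lμ * W μ₁ μ₂)
    (hLπ : ∀ (μ : Measure α) (π₁ π₂ : Pol), W (P π₁ μ) (P π₂ μ) ≤ Lπ * Wp π₁ π₂)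
    (hconv : ∀ (a : ℕ → ℝ≥0∞) (μs νs : ℕ → Measure α),
      W (Measure.sum fun t => a t • μs t) (Measure.sum fun t => a t • νs t)
        ≤ ∑' t, a t * W (μs t) (νs t))
    (μ : Measure α) (π₁ π₂ : Pol) :
    W (Measure.sum fun t : ℕ => ((1 - γ) * γ ^ t) • (P π₁)^[t] μ)
      (Measure.sum fun t : ℕ => ((1 - γ) * γ ^ t) • (P π₂)^[t] μ)
      ≤ γ * Lπ / (1 - γ * Lμ) * Wp π₁ π₂ := by
  -- notation for the geometric partial sums
  set S : ℕ → ℝ≥0∞ := fun t => ∑ i ∈ Finset.range t, Lμ ^ i with hS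
  -- step 1: t-step bound
  have hstep : ∀ t : ℕ, W ((P π₁)^[t] μ) ((P π₂)^[t] μ) ≤ Lπ * S t * Wp π₁ π₂ := by
    intro t
    induction t with
    | zero => simp [hS, hrefl]
    | succ t ih =>
        rw [Function.iterate_succ_apply', Function.iterate_succ_apply']
        calc W (P π₁ ((P π₁)^[t] μ)) (P π₂ ((P π₂)^[t] μ))
            ≤ W (P π₁ ((P π₁)^[t] μ)) (P π₁ ((P π₂)^[t] μ))
              + W (P π₁ ((P π₂)^[t] μ)) (P π₂ ((P π₂)^[t] μ)) := htri _ _ _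
          _ ≤ Lμ * W ((P π₁)^[t] μ) ((P π₂)^[t] μ) + Lπ * Wp π₁ π₂ :=
              add_le_add (hLμ _ _ _) (hLπ _ _ _)
          _ ≤ Lμ * (Lπ * S t * Wp π₁ π₂) + Lπ * Wp π₁ π₂ :=
              add_le_add_left (mul_le_mul_right ih _) _
          _ = Lπ * S (t + 1) * Wp π₁ π₂ := by
              rw [hS]
              simp only [geom_sum_succ]
              ring
  -- step 2: apply convexity and the stepwise bound
  have h1 : W (Measure.sum fun t : ℕ => ((1 - γ) * γ ^ t) • (P π₁)^[t] μ)
      (Measure.sum fun t : ℕ => ((1 - γ) * γ ^ t) • (P π₂)^[t] μ)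
      ≤ ∑' t : ℕ, (1 - γ) * γ ^ t * (Lπ * S t * Wp π₁ π₂) := by
    refine le_trans (hconv _ _ _) (ENNReal.tsum_le_tsum fun t => ?_)
    exact mul_le_mul_right (hstep t) _
  refine h1.trans ?_
  -- step 3: compute the series
  have hγ1 : (1 - γ) * (1 - γ)⁻¹ = 1 := by
    refine ENNReal.mul_inv_cancel ?_ ?_
    · exact (tsub_pos_of_lt hγ).ne'
    · exact (lt_of_le_of_lt tsub_le_self one_lt_top).ne
  have key : (∑' t : ℕ, (1 - γ) * γ ^ t * S t) = γ * (1 - γ * Lμ)⁻¹ := by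
    have hterm : ∀ t : ℕ, (1 - γ) * γ ^ t * S t
        = ∑' i : ℕ, if i < t then Lμ ^ i * ((1 - γ) * γ ^ t) else 0 := by
      intro t
      rw [hS, Finset.mul_sum]
      rw [tsum_eq_sum (s := Finset.range t) (by intro i hi; simp [Finset.mem_range] at hi; simp [hi])]
      refine Finset.sum_congr rfl fun i hi => ?_
      rw [Finset.mem_range] at hi
      simp [hi]; ring
    simp_rw [hterm]
    rw [ENNReal.tsum_comm]
    have hinner : ∀ i : ℕ, (∑' t : ℕ, if i < t then Lμ ^ i * ((1 - γ) * γ ^ t) else 0)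
        = γ * (γ * Lμ) ^ i := by
      intro i
      have : ∀ t : ℕ, (if i < t then Lμ ^ i * ((1 - γ) * γ ^ t) else 0)
          = if i < t then (Lμ ^ i * (1 - γ)) * γ ^ t else 0 := by
        intro t; split <;> ring
      simp_rw [this]
      rw [tsum_ite_lt_geometric]
      calc Lμ ^ i * (1 - γ) * γ ^ (i + 1) * (1 - γ)⁻¹
          = Lμ ^ i * γ ^ (i + 1) * ((1 - γ) * (1 - γ)⁻¹) := by ring
        _ = Lμ ^ i * γ ^ (i + 1) := by rw [hγ1, mul_one]
        _ = γ * (γ * Lμ) ^ i := by rw [mul_pow, pow_succ]; ring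
    simp_rw [hinner]
    rw [ENNReal.tsum_mul_left, ENNReal.tsum_geometric]
  calc (∑' t : ℕ, (1 - γ) * γ ^ t * (Lπ * S t * Wp π₁ π₂))
      = Lπ * Wp π₁ π₂ * ∑' t : ℕ, (1 - γ) * γ ^ t * S t := by
        rw [← ENNReal.tsum_mul_left]
        exact tsum_congr fun t => by ring
    _ = Lπ * Wp π₁ π₂ * (γ * (1 - γ * Lμ)⁻¹) := by rw [key]
    _ ≤ γ * Lπ / (1 - γ * Lμ) * Wp π₁ π₂ := le_of_eq (by rw [div_eq_mul_inv]; ring)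
end

section
/- Advantage decomposition (performance difference) lemma: for an infinite-horizon discounted MDP with discount γ ∈ [0,1), and any two policies π₁, π₂, the payoff difference satisfies η(π₂) - η(π₁) = (1/(1-γ)) · E_{s ∼ ρ^{π₂}_μ}[A^{π₁}(s, π₂)], where ρ^{π₂}_μ is the normalized discounted state visitation distribution of π₂ starting from μ and A^{π₁}(s, π₂) = E_{a∼π₂(·|s)}[Q^{π₁}(s,a) - V^{π₁}(s)]. -/
open Finset

/-- `stateDist P π μ t` is the state distribution after `t` steps of the MDP with
transition kernel `P`, policy `π`, and initial distribution `μ` (finite case). -/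
def stateDist {S A : Type*} [Fintype S] [Fintype A]
    (P : S → A → S → ℝ) (π : S → A → ℝ) (μ : S → ℝ) : ℕ → S → ℝ
  | 0 => μ
  | t + 1 => fun s' => ∑ s : S, stateDist P π μ t s * ∑ a : A, π s a * P s a s'

/-- Advantage decomposition (performance difference) lemma for a finite
discounted MDP: `η(π₂) - η(π₁) = (1/(1-γ)) · E_{s∼ρ^{π₂}_μ}[A^{π₁}(s, π₂)]`,
where `V₁, V₂` are the values of `π₁, π₂` (characterized by their Bellman
equations) and `ρ^{π₂}_μ = (1-γ)·∑_t γᵗ·Pᵗ(μ, π₂)` is the normalized discounted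
visitation distribution. -/
theorem advantage_decomposition {S A : Type*} [Fintype S] [Fintype A]
    (P : S → A → S → ℝ) (R : S → A → ℝ) (μ : S → ℝ) (γ : ℝ)
    (π₁ π₂ : S → A → ℝ) (V₁ V₂ : S → ℝ)
    (hγ0 : 0 ≤ γ) (hγ1 : γ < 1)
    (hP0 : ∀ s a s', 0 ≤ P s a s') (hP1 : ∀ s a, ∑ s', P s a s' = 1)
    (hμ0 : ∀ s, 0 ≤ μ s) (hμ1 : ∑ s, μ s = 1)
    (hπ₁0 : ∀ s a, 0 ≤ π₁ s a) (hπ₁1 : ∀ s, ∑ a, π₁ s a = 1)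
    (hπ₂0 : ∀ s a, 0 ≤ π₂ s a) (hπ₂1 : ∀ s, ∑ a, π₂ s a = 1)
    (hV₁ : ∀ s, V₁ s = ∑ a, π₁ s a * (R s a + γ * ∑ s', P s a s' * V₁ s'))
    (hV₂ : ∀ s, V₂ s = ∑ a, π₂ s a * (R s a + γ * ∑ s', P s a s' * V₂ s')) :
    (∑ s, μ s * V₂ s) - (∑ s, μ s * V₁ s)
      = (1 / (1 - γ)) *
          ∑ s, ((1 - γ) * ∑' t : ℕ, γ ^ t * stateDist P π₂ μ t s) *
            (∑ a, π₂ s a * ((R s a + γ * ∑ s', P s a s' * V₁ s') - V₁ s)) := by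
  have hγne : (1 : ℝ) - γ ≠ 0 := by linarith
  set g : S → ℝ :=
    fun s => ∑ a, π₂ s a * ((R s a + γ * ∑ s', P s a s' * V₁ s') - V₁ s) with hgdef
  set d : ℕ → S → ℝ := stateDist P π₂ μ with hddef
  set W : S → ℝ := fun s => V₂ s - V₁ s with hWdef
  -- basic facts about d
  have hd0 : ∀ t s, 0 ≤ d t s := by
    intro t
    induction t with
    | zero => exact hμ0
    | succ t ih =>
      intro s'
      exact Finset.sum_nonneg fun s _ => mul_nonneg (ih s)
        (Finset.sum_nonneg fun a _ => mul_nonneg (hπ₂0 s a) (hP0 s a s'))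
  have hd1 : ∀ t, ∑ s, d t s = 1 := by
    intro t
    induction t with
    | zero => exact hμ1
    | succ t ih =>
      show (∑ s', ∑ s : S, d t s * ∑ a : A, π₂ s a * P s a s') = 1
      rw [Finset.sum_comm]
      calc (∑ s : S, ∑ s' : S, d t s * ∑ a : A, π₂ s a * P s a s')
          = ∑ s : S, d t s * ∑ a : A, π₂ s a * ∑ s', P s a s' := by
            refine Finset.sum_congr rfl fun s _ => ?_
            rw [← Finset.mul_sum]
            congr 1
            rw [Finset.sum_comm]
            refine Finset.sum_congr rfl fun a _ => ?_
            rw [Finset.mul_sum]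
        _ = 1 := by
            simp only [hP1, mul_one, hπ₂1, mul_one, ih]
  have hdle : ∀ t s, d t s ≤ 1 := by
    intro t s
    calc d t s ≤ ∑ s', d t s' :=
          Finset.single_le_sum (fun s' _ => hd0 t s') (Finset.mem_univ s)
      _ = 1 := hd1 t
  -- pointwise Bellman-difference identity
  have hpt : ∀ s, W s = g s + γ * ∑ a, π₂ s a * ∑ s', P s a s' * W s' := by
    intro s
    have hg' : g s = (∑ a, π₂ s a * (R s a + γ * ∑ s', P s a s' * V₁ s')) - V₁ s := by
      rw [hgdef]
      simp only [mul_sub, Finset.sum_sub_distrib, ← Finset.sum_mul, hπ₂1, one_mul]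
    have h2 : W s = (∑ a, π₂ s a * (R s a + γ * ∑ s', P s a s' * V₂ s')) - V₁ s := by
      rw [hWdef]; rw [← hV₂ s]
    rw [h2, hg']
    have : ∀ a, π₂ s a * (R s a + γ * ∑ s', P s a s' * V₂ s')
        - π₂ s a * (R s a + γ * ∑ s', P s a s' * V₁ s')
        = γ * (π₂ s a * ∑ s', P s a s' * W s') := by
      intro a
      have h : (∑ s', P s a s' * V₂ s') - (∑ s', P s a s' * V₁ s')
          = ∑ s', P s a s' * W s' := by
        rw [← Finset.sum_sub_distrib]
        exact Finset.sum_congr rfl fun s' _ => by rw [hWdef]; ring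
      rw [← h]; ring
    have heq : (∑ a, π₂ s a * (R s a + γ * ∑ s', P s a s' * V₂ s'))
        - (∑ a, π₂ s a * (R s a + γ * ∑ s', P s a s' * V₁ s'))
        = γ * ∑ a, π₂ s a * ∑ s', P s a s' * W s' := by
      rw [← Finset.sum_sub_distrib, Finset.mul_sum]
      exact Finset.sum_congr rfl fun a _ => this a
    linarith [heq]
  -- propagation identity
  have hprop : ∀ t (F : S → ℝ),
      ∑ s', d (t + 1) s' * F s' = ∑ s, d t s * ∑ a, π₂ s a * ∑ s', P s a s' * F s' := by
    intro t F
    show (∑ s', (∑ s : S, d t s * ∑ a : A, π₂ s a * P s a s') * F s') = _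
    simp only [Finset.sum_mul]
    rw [Finset.sum_comm]
    refine Finset.sum_congr rfl fun s _ => ?_
    simp only [Finset.sum_mul, Finset.mul_sum]
    rw [Finset.sum_comm]
    refine Finset.sum_congr rfl fun a _ => Finset.sum_congr rfl fun s' _ => by ring
  -- one-step recursion
  have hrec : ∀ t, ∑ s, d t s * W s
      = (∑ s, d t s * g s) + γ * ∑ s', d (t + 1) s' * W s' := by
    intro t
    rw [hprop t W]
    calc ∑ s, d t s * W s
        = ∑ s, (d t s * g s + γ * (d t s * ∑ a, π₂ s a * ∑ s', P s a s' * W s')) := by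
          refine Finset.sum_congr rfl fun s _ => ?_
          rw [hpt s]; ring
      _ = _ := by rw [Finset.sum_add_distrib, ← Finset.mul_sum]
  -- telescoping
  have htel : ∀ n, ∑ t ∈ Finset.range n, γ ^ t * (∑ s, d t s * g s)
      = (∑ s, d 0 s * W s) - γ ^ n * ∑ s, d n s * W s := by
    intro n
    induction n with
    | zero => simp
    | succ n ih =>
      rw [Finset.sum_range_succ, ih, hrec n]
      ring
  -- limit
  set M : ℝ := ∑ s, |W s| with hM
  have hbound : ∀ t, |∑ s, d t s * W s| ≤ M := by
    intro t
    calc |∑ s, d t s * W s| ≤ ∑ s, |d t s * W s| := Finset.abs_sum_le_sum_abs _ _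
      _ ≤ M := by
        refine Finset.sum_le_sum fun s _ => ?_
        rw [abs_mul, abs_of_nonneg (hd0 t s)]
        exact mul_le_of_le_one_left (abs_nonneg _) (hdle t s)
  set C : ℝ := ∑ s, |g s| with hC
  have hgbound : ∀ t, |∑ s, d t s * g s| ≤ C := by
    intro t
    calc |∑ s, d t s * g s| ≤ ∑ s, |d t s * g s| := Finset.abs_sum_le_sum_abs _ _
      _ ≤ C := by
        refine Finset.sum_le_sum fun s _ => ?_
        rw [abs_mul, abs_of_nonneg (hd0 t s)]
        exact mul_le_of_le_one_left (abs_nonneg _) (hdle t s)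
  set f : ℕ → ℝ := fun t => γ ^ t * (∑ s, d t s * g s) with hf
  have hγabs : |γ| < 1 := abs_lt.2 ⟨by linarith, hγ1⟩
  have hsumf : Summable f := by
    refine Summable.of_norm_bounded (g := fun t => γ ^ t * C) ?_ ?_
    · exact (summable_geometric_of_lt_one hγ0 hγ1).mul_right C
    · intro t
      rw [Real.norm_eq_abs, hf, abs_mul, abs_pow, abs_of_nonneg hγ0]
      exact mul_le_mul_of_nonneg_left (hgbound t) (pow_nonneg hγ0 t)
  have hlim1 : Filter.Tendsto (fun n => ∑ t ∈ Finset.range n, f t)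
      Filter.atTop (nhds (∑' t, f t)) := hsumf.hasSum.tendsto_sum_nat
  have hlim2 : Filter.Tendsto (fun n => ∑ t ∈ Finset.range n, f t)
      Filter.atTop (nhds (∑ s, d 0 s * W s)) := by
    have h0 : Filter.Tendsto (fun n : ℕ => γ ^ n * ∑ s, d n s * W s)
        Filter.atTop (nhds 0) := by
      apply squeeze_zero_norm (fun n => ?_)
        (by simpa using (tendsto_pow_atTop_nhds_zero_of_lt_one hγ0 hγ1).mul_const M)
      rw [Real.norm_eq_abs, abs_mul, abs_pow, abs_of_nonneg hγ0]
      exact mul_le_mul_of_nonneg_left (hbound n) (pow_nonneg hγ0 n)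
    have := (tendsto_const_nhds (x := ∑ s, d 0 s * W s)
      (f := Filter.atTop (α := ℕ))).sub h0
    rw [sub_zero] at this
    refine this.congr fun n => ?_
    rw [htel n]
  have hsum_eq : ∑' t, f t = ∑ s, d 0 s * W s := tendsto_nhds_unique hlim1 hlim2
  -- summability of each state's series
  have hsum_s : ∀ s, Summable (fun t => γ ^ t * d t s) := by
    intro s
    refine Summable.of_norm_bounded (g := fun t => γ ^ t) (summable_geometric_of_lt_one hγ0 hγ1) ?_
    intro t
    rw [Real.norm_eq_abs, abs_mul, abs_pow, abs_of_nonneg hγ0,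
      abs_of_nonneg (hd0 t s)]
    exact mul_le_of_le_one_right (pow_nonneg hγ0 t) (hdle t s)
  -- rewrite RHS
  have hRHS : ∑ s, ((1 - γ) * ∑' t : ℕ, γ ^ t * d t s) * g s
      = (1 - γ) * ∑' t, f t := by
    calc ∑ s, ((1 - γ) * ∑' t : ℕ, γ ^ t * d t s) * g s
        = (1 - γ) * ∑ s, ∑' t : ℕ, γ ^ t * d t s * g s := by
          rw [Finset.mul_sum]
          refine Finset.sum_congr rfl fun s _ => ?_
          rw [mul_assoc, tsum_mul_right]
      _ = (1 - γ) * ∑' t, ∑ s, γ ^ t * d t s * g s := by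
          congr 1
          refine (Summable.tsum_finsetSum ?_).symm
          intro s _
          exact (hsum_s s).mul_right (g s)
      _ = (1 - γ) * ∑' t, f t := by
          congr 1
          refine tsum_congr fun t => ?_
          show ∑ s, γ ^ t * d t s * g s = γ ^ t * ∑ s, d t s * g s
          rw [Finset.mul_sum]
          exact Finset.sum_congr rfl fun s _ => by ring
  have hLHS : (∑ s, μ s * V₂ s) - (∑ s, μ s * V₁ s) = ∑ s, d 0 s * W s := by
    rw [← Finset.sum_sub_distrib]
    exact Finset.sum_congr rfl fun s _ => by
      show μ s * V₂ s - μ s * V₁ s = d 0 s * W s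
      rw [hWdef]
      show _ = μ s * (V₂ s - V₁ s)
      ring
  rw [hLHS]
  show _ = (1 / (1 - γ)) * ∑ s, ((1 - γ) * ∑' t : ℕ, γ ^ t * d t s) * g s
  rw [hRHS, hsum_eq]
  field_simp
end

section
/- DeVine exactness: in a finite-horizon MDP with deterministic transitions, deterministic initial state, and deterministic differentiable policies, if the DeVine estimator perturbs each action coordinate j at each time-step t exactly once with perturbation σ·e_j and weight γᵗ, then the limit as σ → 0 of the gradient of the DeVine surrogate A^{π₁}(π₂) at π₂ = π₁ equals the exact policy gradient ∇_{π₂} η(π₂)|_{π₂=π₁}. -/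
open ContinuousLinearMap Filter

/-- DeVine exactness: in a finite-horizon MDP with deterministic dynamics and
deterministic differentiable policies, if each action coordinate `j` at each
time-step `t` is perturbed exactly once by `σ·e_j` with weight `γᵗ`, then the
gradient at `θ₁` of the DeVine surrogate
`𝔸^{π₁}(π₂) = ∑_t ∑_j γᵗ·(π₂(s_t) - π₁(s_t))ᵀe_j·A^{π₁}(s_t, π₁(s_t)+σe_j)/σ`
converges, as `σ → 0`, to the exact policy gradient `∇η` at `θ₁`. -/
theorem devine_exactness
    {S : Type*} {p n H : ℕ} (γ : ℝ)
    (η : (Fin p → ℝ) → ℝ)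
    (π : (Fin p → ℝ) → S → (Fin n → ℝ))
    (Adv : S → (Fin n → ℝ) → ℝ)
    (θ₁ : Fin p → ℝ) (s : Fin H → S)
    (Dπ : Fin H → ((Fin p → ℝ) →L[ℝ] (Fin n → ℝ)))
    (DA : Fin H → ((Fin n → ℝ) →L[ℝ] ℝ))
    (hDπ : ∀ t, HasFDerivAt (fun θ => π θ (s t)) (Dπ t) θ₁)
    (hDA : ∀ t, HasFDerivAt (Adv (s t)) (DA t) (π θ₁ (s t)))
    (hzero : ∀ t, Adv (s t) (π θ₁ (s t)) = 0)
    (hη : HasFDerivAt η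
      (∑ t : Fin H, γ ^ (t : ℕ) •
        ∑ j : Fin n, (DA t (Pi.single j 1)) •
          ((ContinuousLinearMap.proj j : (Fin n → ℝ) →L[ℝ] ℝ).comp (Dπ t))) θ₁) :
    Tendsto
      (fun σ : ℝ =>
        fderiv ℝ
          (fun θ => ∑ t : Fin H, ∑ j : Fin n,
            γ ^ (t : ℕ) * ((π θ (s t) j - π θ₁ (s t) j) *
              (Adv (s t) (π θ₁ (s t) + σ • (Pi.single j 1 : Fin n → ℝ)) / σ)))
          θ₁)
      (nhdsWithin 0 {0}ᶜ) (nhds (fderiv ℝ η θ₁)) := by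
  have hηd : fderiv ℝ η θ₁ = ∑ t : Fin H, γ ^ (t : ℕ) •
      ∑ j : Fin n, (DA t (Pi.single j 1)) •
        ((ContinuousLinearMap.proj j : (Fin n → ℝ) →L[ℝ] ℝ).comp (Dπ t)) := hη.fderiv
  rw [hηd]
  have key : ∀ σ : ℝ,
      fderiv ℝ
        (fun θ => ∑ t : Fin H, ∑ j : Fin n,
          γ ^ (t : ℕ) * ((π θ (s t) j - π θ₁ (s t) j) *
            (Adv (s t) (π θ₁ (s t) + σ • (Pi.single j 1 : Fin n → ℝ)) / σ))) θ₁
      = ∑ t : Fin H, ∑ j : Fin n,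
          (γ ^ (t : ℕ) * (Adv (s t) (π θ₁ (s t) + σ • (Pi.single j 1 : Fin n → ℝ)) / σ)) •
            ((ContinuousLinearMap.proj j : (Fin n → ℝ) →L[ℝ] ℝ).comp (Dπ t)) := by
    intro σ
    have h : HasFDerivAt
        (fun θ => ∑ t : Fin H, ∑ j : Fin n,
          γ ^ (t : ℕ) * ((π θ (s t) j - π θ₁ (s t) j) *
            (Adv (s t) (π θ₁ (s t) + σ • (Pi.single j 1 : Fin n → ℝ)) / σ)))
        (∑ t : Fin H, ∑ j : Fin n,
          (γ ^ (t : ℕ) * (Adv (s t) (π θ₁ (s t) + σ • (Pi.single j 1 : Fin n → ℝ)) / σ)) •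
            ((ContinuousLinearMap.proj j : (Fin n → ℝ) →L[ℝ] ℝ).comp (Dπ t))) θ₁ := by
      apply HasFDerivAt.fun_sum
      intro t _
      apply HasFDerivAt.fun_sum
      intro j _
      set K := Adv (s t) (π θ₁ (s t) + σ • (Pi.single j 1 : Fin n → ℝ)) / σ with hK
      have h1 : HasFDerivAt (fun θ => π θ (s t) j)
          ((ContinuousLinearMap.proj j : (Fin n → ℝ) →L[ℝ] ℝ).comp (Dπ t)) θ₁ := by
        exact
          ((ContinuousLinearMap.proj j : (Fin n → ℝ) →L[ℝ] ℝ).hasFDerivAt).comp θ₁ (hDπ t)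
      have h2 := ((h1.sub_const (π θ₁ (s t) j)).mul_const K).const_mul (γ ^ (t : ℕ))
      simpa [smul_smul, mul_comm] using h2
    exact h.fderiv
  rw [show (∑ t : Fin H, γ ^ (t : ℕ) •
      ∑ j : Fin n, (DA t (Pi.single j 1)) •
        ((ContinuousLinearMap.proj j : (Fin n → ℝ) →L[ℝ] ℝ).comp (Dπ t)))
    = ∑ t : Fin H, ∑ j : Fin n,
        (γ ^ (t : ℕ) * DA t (Pi.single j 1)) •
          ((ContinuousLinearMap.proj j : (Fin n → ℝ) →L[ℝ] ℝ).comp (Dπ t)) by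
    simp [Finset.smul_sum, smul_smul]]
  simp only [key]
  apply tendsto_finset_sum
  intro t _
  apply tendsto_finset_sum
  intro j _
  apply Tendsto.smul_const
  apply Tendsto.const_mul
  -- slope limit
  set v : Fin n → ℝ := Pi.single j 1 with hv
  have hg : HasDerivAt (fun σ : ℝ => Adv (s t) (π θ₁ (s t) + σ • v)) (DA t v) 0 := by
    have hinner : HasDerivAt (fun σ : ℝ => π θ₁ (s t) + σ • v) v 0 := by
      simpa using ((hasDerivAt_id (0 : ℝ)).smul_const v).const_add (π θ₁ (s t))
    have hDA' : HasFDerivAt (Adv (s t)) (DA t) (π θ₁ (s t) + (0 : ℝ) • v) := by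
      simpa using hDA t
    have := hDA'.comp_hasDerivAt 0 hinner
    exact this
  have hslope := hasDerivAt_iff_tendsto_slope.mp hg
  refine hslope.congr' ?_
  filter_upwards [self_mem_nhdsWithin] with σ hσ
  have hg0 : Adv (s t) (π θ₁ (s t) + (0 : ℝ) • v) = 0 := by
    simpa using hzero t
  simp only [slope_def_field, hg0, sub_zero]
end
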